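/- For all positive integers k and t, M_2(k+t, k) ≥ ⌊k/(t+1)⌋^{t+1}. -/

import Mathlib

open Finset

/-- The support of a vector `x ∈ F_2^n`: the set of nonzero coordinates. -/
def supp {n : ℕ} (x : Fin n → ZMod 2) : Set (Fin n) := {i | x i ≠ 0}

/-- `c` is a minimal codeword of the linear code (subspace) `C ≤ F_2^n`:
it is a nonzero codeword and no nonzero codeword has support properly contained in `supp c`. -/
def IsMinimal {n : ℕ} (C : Submodule (ZMod 2) (Fin n → ZMod 2)) (c : Fin n → ZMod 2) : Prop :=
  c ∈ C ∧ c ≠ 0 ∧ ∀ c' ∈ C, c' ≠ 0 → ¬ supp c' ⊂ supp c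

/-- `M(C)`: the number of minimal codewords of `C`. -/
noncomputable def Mcode {n : ℕ} (C : Submodule (ZMod 2) (Fin n → ZMod 2)) : ℕ :=
  Set.ncard {c | IsMinimal C c}

/-- The `i`-th row `g^i` of the systematic generator matrix `G = [I_k | A]`. -/
def row {k t : ℕ} (A : Fin k → Fin t → ZMod 2) (i : Fin k) : Fin (k + t) → ZMod 2 :=
  Fin.append (Pi.single i 1) (A i)

/-- The binary linear `[k+t, k]` code with systematic generator matrix `G = [I_k | A]`. -/
def genCode {k t : ℕ} (A : Fin k → Fin t → ZMod 2) :
    Submodule (ZMod 2) (Fin (k + t) → ZMod 2) :=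
  Submodule.span (ZMod 2) (Set.range (row A))

/-- `c^S = ∑_{i ∈ S} g^i`. -/
def cS {k t : ℕ} (A : Fin k → Fin t → ZMod 2) (S : Finset (Fin k)) : Fin (k + t) → ZMod 2 :=
  ∑ i ∈ S, row A i

/-- `c_I`: the restriction of a codeword to its last `t` coordinates (the information bits). -/
def infoBits {k t : ℕ} (c : Fin (k + t) → ZMod 2) : Fin t → ZMod 2 :=
  fun j => c (Fin.natAdd k j)

/-- `a_τ(A)` : the number of indices `i` with `g^i_I = A i = τ`. -/
def aCount {k t : ℕ} (A : Fin k → Fin t → ZMod 2) (τ : Fin t → ZMod 2) : ℕ :=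
  (Finset.univ.filter fun i => A i = τ).card

/-- `M_2(n, k)`: the maximum of `M(C)` over all binary linear `[n, k]` codes `C`. -/
noncomputable def M2 (n k : ℕ) : ℕ :=
  sSup {m | ∃ C : Submodule (ZMod 2) (Fin n → ZMod 2),
    Module.finrank (ZMod 2) C = k ∧ Mcode C = m}

/-! Put `q = ⌊k / (t + 1)⌋` and let `A` have `t + 1` disjoint blocks of `q` rows, the rows of
block `0` all equal to the all-ones vector of `F_2^t` and those of block `j + 1` all equal to the
unit vector `e_j`. These `t + 1` vectors form a circuit: they sum to zero and no nonempty proper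
subfamily does. So for each of the `q ^ (t + 1)` ways of picking one row from every block, the
picked set `S` gives a codeword `c^S` that vanishes on the last `t` coordinates; a nonzero
codeword `c^{S'}` with smaller support would need `S' ⊂ S` with zero `A`-sum, which does not
exist. -/

lemma ZMod.two_ite_add_ite_eq_zero_iff (p q : Prop) [Decidable p] [Decidable q] :
    ((if p then 1 else 0) + (if q then 1 else 0) : ZMod 2) = 0 ↔ (p ↔ q) := by
  by_cases p <;> by_cases q <;> simp_all; decide

lemma ZMod.two_smul_eq_ite {M : Type*} [AddCommGroup M] [Module (ZMod 2) M] (a : ZMod 2)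
    (x : M) : a • x = if a = 1 then x else 0 := by
  obtain rfl | rfl : a = 0 ∨ a = 1 := by revert a; decide
  · simp [show (0 : ZMod 2) ≠ 1 by decide]
  · simp

section ZeroSumCircuit

variable {ι V : Type*} [AddCommMonoid V]

/-- Over `F_2`, these are the circuits of the binary matroid represented by `v`. -/
def IsZeroSumCircuit (v : ι → V) (s : Finset ι) : Prop :=
  ∀ s' ⊆ s, s'.Nonempty → (∑ i ∈ s', v i = 0 ↔ s' = s)

theorem IsZeroSumCircuit.image {κ : Type*} [DecidableEq κ] {v : ι → V}
    {w : κ → V} {s : Finset ι} {g : ι → κ} (hg : Function.Injective g) (hw : ∀ i, w (g i) = v i)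
    (hs : IsZeroSumCircuit v s) : IsZeroSumCircuit w (s.image g) := by
  intro s' hs' hne
  obtain ⟨T, hTs, rfl⟩ := Finset.subset_image_iff.mp hs'
  rw [Finset.sum_image hg.injOn, Finset.image_injective hg |>.eq_iff]
  simp only [hw]
  exact hs T hTs (Finset.image_nonempty.mp hne)

end ZeroSumCircuit

/-- The all-ones vector followed by the `t` unit vectors of `F_2^t`. -/
def onesAndUnitVectors (t : ℕ) (j : Fin (t + 1)) : Fin t → ZMod 2 :=
  fun x => if j = 0 ∨ j = x.succ then 1 else 0

lemma sum_onesAndUnitVectors_apply {t : ℕ} (T : Finset (Fin (t + 1))) (x : Fin t) :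
    (∑ j ∈ T, onesAndUnitVectors t j) x =
      (if 0 ∈ T then 1 else 0) + (if x.succ ∈ T then 1 else 0) := by
  have hsplit : ∀ j, onesAndUnitVectors t j x =
      (if 0 = j then 1 else 0) + (if x.succ = j then 1 else 0) := by
    intro j
    rcases eq_or_ne j 0 with rfl | hj
    · simp [onesAndUnitVectors, (Fin.succ_ne_zero x).symm]
    · simp [onesAndUnitVectors, hj, hj.symm, eq_comm]
  simp only [Finset.sum_apply, hsplit, Finset.sum_add_distrib, Finset.sum_ite_eq]

theorem isZeroSumCircuit_onesAndUnitVectors (t : ℕ) :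
    IsZeroSumCircuit (onesAndUnitVectors t) Finset.univ := by
  intro T _ hT
  have hsum : ∑ j ∈ T, onesAndUnitVectors t j = 0 ↔ ∀ x : Fin t, (0 ∈ T ↔ x.succ ∈ T) := by
    simp only [funext_iff, sum_onesAndUnitVectors_apply, Pi.zero_apply,
      ZMod.two_ite_add_ite_eq_zero_iff]
  rw [hsum, Finset.eq_univ_iff_forall]
  constructor
  · intro h
    obtain ⟨j, hj⟩ := hT
    have h0 : 0 ∈ T := by
      cases j using Fin.cases with
      | zero => exact hj
      | succ x => exact (h x).mpr hj
    intro j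
    cases j using Fin.cases with
    | zero => exact h0
    | succ x => exact (h x).mp h0
  · intro h x
    simp [h]

section SystematicCode

variable {k t : ℕ} (A : Fin k → Fin t → ZMod 2)

lemma cS_castAdd (S : Finset (Fin k)) (i : Fin k) :
    cS A S (Fin.castAdd t i) = if i ∈ S then 1 else 0 := by
  simp [cS, row, Finset.sum_apply, Pi.single_apply]

lemma cS_natAdd (S : Finset (Fin k)) (j : Fin t) :
    cS A S (Fin.natAdd k j) = (∑ i ∈ S, A i) j := by
  simp [cS, row, Finset.sum_apply]

lemma castAdd_mem_supp_cS {S : Finset (Fin k)} {i : Fin k} :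
    Fin.castAdd t i ∈ supp (cS A S) ↔ i ∈ S := by
  by_cases hi : i ∈ S <;> simp [supp, cS_castAdd, hi]

lemma natAdd_mem_supp_cS {S : Finset (Fin k)} {j : Fin t} :
    Fin.natAdd k j ∈ supp (cS A S) ↔ (∑ i ∈ S, A i) j ≠ 0 := by
  simp [supp, cS_natAdd]

lemma cS_injective : Function.Injective (cS A) := by
  intro S S' h
  ext i
  rw [← castAdd_mem_supp_cS A, h, castAdd_mem_supp_cS A]

lemma mem_genCode_iff {c : Fin (k + t) → ZMod 2} : c ∈ genCode A ↔ ∃ S, cS A S = c := by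
  constructor
  · intro hc
    obtain ⟨f, rfl⟩ := (Submodule.mem_span_range_iff_exists_fun (ZMod 2)).mp hc
    refine ⟨Finset.univ.filter fun i => f i = 1, ?_⟩
    simp only [cS, Finset.sum_filter, ZMod.two_smul_eq_ite]
  · rintro ⟨S, rfl⟩
    exact Submodule.sum_mem _ fun i _ => Submodule.subset_span ⟨i, rfl⟩

theorem finrank_genCode : Module.finrank (ZMod 2) (genCode A) = k := by
  have hrestrict : LinearMap.funLeft (ZMod 2) (ZMod 2) (Fin.castAdd t) ∘ row A =
      fun i => Pi.single i 1 := by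
    funext i
    ext j
    simp [LinearMap.funLeft, row]
  have hli : LinearIndependent (ZMod 2) (row A) :=
    LinearIndependent.of_comp _ (hrestrict ▸ Pi.linearIndependent_single_one (Fin k) (ZMod 2))
  rw [genCode, finrank_span_eq_card hli, Fintype.card_fin]

theorem isMinimal_cS {S : Finset (Fin k)} (hne : S.Nonempty) (hS : IsZeroSumCircuit A S) :
    IsMinimal (genCode A) (cS A S) := by
  have hsum : ∑ i ∈ S, A i = 0 := (hS S subset_rfl hne).mpr rfl
  refine ⟨(mem_genCode_iff A).mpr ⟨S, rfl⟩, ?_, ?_⟩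
  · rw [← Finset.sum_empty (f := row A), ← cS, (cS_injective A).ne_iff]
    exact hne.ne_empty
  · rintro _ hc' hc'ne hsub
    obtain ⟨S', rfl⟩ := (mem_genCode_iff A).mp hc'
    have hS'S : S' ⊆ S := fun i hi =>
      (castAdd_mem_supp_cS A).mp (hsub.subset ((castAdd_mem_supp_cS A).mpr hi))
    have hsum' : ∑ i ∈ S', A i = 0 := by
      funext j
      by_contra hj
      have := hsub.subset ((natAdd_mem_supp_cS A).mpr hj)
      rw [natAdd_mem_supp_cS, hsum] at this
      exact this rfl
    have hS'ne : S'.Nonempty := by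
      rw [Finset.nonempty_iff_ne_empty]
      rintro rfl
      exact hc'ne Finset.sum_empty
    rw [(hS S' hS'S hS'ne).mp hsum'] at hsub
    exact hsub.ne rfl

end SystematicCode

theorem pow_card_le_Mcode {k t : ℕ} {ι β : Type*} [Fintype ι] [Nonempty ι]
    [Fintype β] (A : Fin k → Fin t → ZMod 2) (v : ι → Fin t → ZMod 2)
    (hv : IsZeroSumCircuit v Finset.univ) (e : ι × β ↪ Fin k) (hA : ∀ p, A (e p) = v p.1) :
    Fintype.card β ^ Fintype.card ι ≤ Mcode (genCode A) := by
  set S : (ι → β) → Finset (Fin k) := fun f => Finset.univ.image fun j => e (j, f j)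
  have hS : Function.Injective S := by
    intro f f' h
    funext j
    have hj : e (j, f j) ∈ S f' := h ▸ Finset.mem_image_of_mem _ (Finset.mem_univ j)
    obtain ⟨j', -, hj'⟩ := Finset.mem_image.mp hj
    obtain ⟨rfl, hf⟩ := Prod.ext_iff.mp (e.injective hj')
    exact hf.symm
  have hmin : ∀ f, IsMinimal (genCode A) (cS A (S f)) := fun f =>
    isMinimal_cS A (Finset.univ_nonempty.image _)
      (hv.image (fun j j' h => congrArg Prod.fst (e.injective h)) fun j => hA (j, f j))
  calc Fintype.card β ^ Fintype.card ι = Nat.card (ι → β) := by simp [Nat.card_fun]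
    _ = (Set.range (cS A ∘ S)).ncard :=
      (Set.ncard_range_of_injective ((cS_injective A).comp hS)).symm
    _ ≤ Mcode (genCode A) :=
      Set.ncard_le_ncard (Set.range_subset_iff.mpr hmin) (Set.toFinite _)

lemma Mcode_le_M2 {n k : ℕ} (C : Submodule (ZMod 2) (Fin n → ZMod 2))
    (hC : Module.finrank (ZMod 2) C = k) : Mcode C ≤ M2 n k :=
  le_csSup ⟨Nat.card (Fin n → ZMod 2), by rintro _ ⟨C, -, rfl⟩; exact Set.ncard_le_card _⟩
    ⟨C, hC, rfl⟩

theorem stmt12_general (k t : ℕ) :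
    (k / (t + 1)) ^ (t + 1) ≤ M2 (k + t) k := by
  set q := k / (t + 1)
  let e : Fin (t + 1) × Fin q ↪ Fin k :=
    finProdFinEquiv.toEmbedding.trans (Fin.castLEEmb (Nat.mul_div_le k (t + 1)))
  let A : Fin k → Fin t → ZMod 2 := Function.extend e (fun p => onesAndUnitVectors t p.1) 0
  calc q ^ (t + 1) = Fintype.card (Fin q) ^ Fintype.card (Fin (t + 1)) := by simp
    _ ≤ Mcode (genCode A) :=
      pow_card_le_Mcode A _ (isZeroSumCircuit_onesAndUnitVectors t) e
        (e.injective.extend_apply _ _)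
    _ ≤ M2 (k + t) k := Mcode_le_M2 _ (finrank_genCode A)

theorem stmt12 (k t : ℕ) (hk : 0 < k) (ht : 0 < t) :
    (k / (t + 1)) ^ (t + 1) ≤ M2 (k + t) k :=
  stmt12_general k t
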